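/- Let G be a (fork, butterfly)-free graph. If G contains an induced subgraph isomorphic to an odd balloon, then G has a trisimplicial vertex, i.e., a vertex whose open neighborhood is the union of three cliques. -/
import Mathlib


open SimpleGraph

/-- The fork: `K_{1,3}` with one edge subdivided once.
Vertices `a=0, b=1, c=2, d=3, e=4`; edges `ab, ac, ad, de`. -/
def fork : SimpleGraph (Fin 5) :=
  SimpleGraph.fromRel (fun x y =>
    (x = 0 ∧ y = 1) ∨ (x = 0 ∧ y = 2) ∨ (x = 0 ∧ y = 3) ∨ (x = 3 ∧ y = 4))

/-- A graph `G` is `H`-free if it has no induced subgraph isomorphic to `H`,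
equivalently there is no graph embedding of `H` into `G`. -/
def HFree {V W : Type*} (G : SimpleGraph V) (H : SimpleGraph W) : Prop :=
  IsEmpty (H ↪g G)

/-- The odd balloon with cycle length `n`: obtained from the cycle
`v_0 v_1 ... v_{n-1} v_0` (the vertices `Sum.inl i`) by adding a vertex
`u = Sum.inr 0` adjacent exactly to `v_0` and `v_1`, and a vertex
`s = Sum.inr 1` adjacent exactly to `u`. -/
def oddBalloon (n : ℕ) : SimpleGraph (Fin n ⊕ Fin 2) :=
  SimpleGraph.fromRel (fun x y =>
    (∃ i j : Fin n, x = Sum.inl i ∧ y = Sum.inl j ∧ ((i : ℕ) + 1) % n = (j : ℕ)) ∨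
    (∃ i : Fin n, x = Sum.inr 0 ∧ y = Sum.inl i ∧ ((i : ℕ) = 0 ∨ (i : ℕ) = 1)) ∨
    (x = Sum.inr 0 ∧ y = Sum.inr 1))

/-- The butterfly `K_1 + 2K_2`: two triangles `{0,1,2}` and `{0,3,4}`
sharing exactly the vertex `0`. -/
def butterfly : SimpleGraph (Fin 5) :=
  SimpleGraph.fromRel (fun x y =>
    x = 0 ∨ (x = 1 ∧ y = 2) ∨ (x = 3 ∧ y = 4))


section Helpers
lemma ob_inl_adj {n : ℕ} {i j : ℕ} (hi : i < n) (hj : j < n) :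
    (oddBalloon n).Adj (Sum.inl ⟨i,hi⟩) (Sum.inl ⟨j,hj⟩) ↔
      (i ≠ j ∧ ((i+1) % n = j ∨ (j+1) % n = i)) := by
  simp [oddBalloon, fromRel_adj, Fin.ext_iff]
  intro hne
  constructor
  · rintro (⟨a,ha,b,hb,h⟩|⟨a,ha,b,hb,h⟩)
    · subst ha; subst hb; exact Or.inl h
    · subst ha; subst hb; exact Or.inr h
  · rintro (h|h)
    · exact Or.inl ⟨⟨i,hi⟩, rfl, ⟨j,hj⟩, rfl, h⟩
    · exact Or.inr ⟨⟨j,hj⟩, rfl, ⟨i,hi⟩, rfl, h⟩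

lemma ob_u_inl {n : ℕ} {i : ℕ} (hi : i < n) :
    (oddBalloon n).Adj (Sum.inr 0) (Sum.inl ⟨i,hi⟩) ↔ (i = 0 ∨ i = 1) := by
  simp [oddBalloon, fromRel_adj, Fin.ext_iff]
  constructor
  · rintro ⟨x,hx,h⟩; subst hx; exact h
  · intro h; exact ⟨⟨i,hi⟩, rfl, h⟩

lemma ob_s_inl {n : ℕ} {i : ℕ} (hi : i < n) :
    ¬ (oddBalloon n).Adj (Sum.inr 1) (Sum.inl ⟨i,hi⟩) := by
  simp [oddBalloon, fromRel_adj]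

lemma ob_u_s {n : ℕ} : (oddBalloon n).Adj (Sum.inr 0) (Sum.inr 1) := by
  simp [oddBalloon, fromRel_adj]

variable {V : Type*} {G : SimpleGraph V}

lemma no_fork (hfree : HFree G fork) {a b c d e : V}
    (hbc : b ≠ c) (hbd : b ≠ d) (hcd : c ≠ d) (hae : a ≠ e) (hbe : b ≠ e) (hce : c ≠ e)
    (ab : G.Adj a b) (ac : G.Adj a c) (ad : G.Adj a d) (de : G.Adj d e)
    (nbc : ¬G.Adj b c) (nbd : ¬G.Adj b d) (ncd : ¬G.Adj c d)
    (nae : ¬G.Adj a e) (nbe : ¬G.Adj b e) (nce : ¬G.Adj c e) : False := by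
  have hab := ab.ne; have hac := ac.ne; have had := ad.ne; have hde := de.ne
  have hinj : Function.Injective ![a,b,c,d,e] := by
    intro i j h; fin_cases i <;> fin_cases j <;> simp_all
  have hemb : fork ↪g G := by
    refine ⟨⟨![a,b,c,d,e], hinj⟩, ?_⟩
    intro i j
    have hba := ab.symm; have hca := ac.symm; have hda := ad.symm; have hed := de.symm
    have ncb : ¬G.Adj c b := fun h => nbc h.symm
    have ndb : ¬G.Adj d b := fun h => nbd h.symm
    have ndc : ¬G.Adj d c := fun h => ncd h.symm
    have nea : ¬G.Adj e a := fun h => nae h.symm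
    have neb : ¬G.Adj e b := fun h => nbe h.symm
    have nec : ¬G.Adj e c := fun h => nce h.symm
    fin_cases i <;> fin_cases j <;>
      simp [fork, fromRel_adj, G.irrefl] <;> tauto
  exact hfree.elim hemb

lemma no_butterfly (hfree : HFree G butterfly) {o p q r t : V}
    (hpr : p ≠ r) (hpt : p ≠ t) (hqr : q ≠ r) (hqt : q ≠ t)
    (op : G.Adj o p) (oq : G.Adj o q) (or' : G.Adj o r) (ot : G.Adj o t)
    (pq : G.Adj p q) (rt : G.Adj r t)
    (npr : ¬G.Adj p r) (npt : ¬G.Adj p t) (nqr : ¬G.Adj q r) (nqt : ¬G.Adj q t) : False := by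
  have h1 := op.ne; have h2 := oq.ne; have h3 := or'.ne; have h4 := ot.ne
  have h5 := pq.ne; have h6 := rt.ne
  have hinj : Function.Injective ![o,p,q,r,t] := by
    intro i j h; fin_cases i <;> fin_cases j <;> simp_all
  have hemb : butterfly ↪g G := by
    refine ⟨⟨![o,p,q,r,t], hinj⟩, ?_⟩
    intro i j
    have b1 := op.symm; have b2 := oq.symm; have b3 := or'.symm; have b4 := ot.symm
    have b5 := pq.symm; have b6 := rt.symm
    have c1 : ¬G.Adj r p := fun h => npr h.symm
    have c2 : ¬G.Adj t p := fun h => npt h.symm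
    have c3 : ¬G.Adj r q := fun h => nqr h.symm
    have c4 : ¬G.Adj t q := fun h => nqt h.symm
    fin_cases i <;> fin_cases j <;>
      simp [butterfly, fromRel_adj, G.irrefl] <;> tauto
  exact hfree.elim hemb


lemma pair_big (hfork : HFree G fork) (hbf : HFree G butterfly)
    (u s p1 p2 q1 q2 r1 r2 x y : V)
    (h_u_s : G.Adj u s)
    (h_u_p1 : G.Adj u p1)
    (h_u_p2 : G.Adj u p2)
    (h_u_q1 : ¬G.Adj u q1)
    (h_u_q2 : ¬G.Adj u q2)
    (h_u_r1 : ¬G.Adj u r1)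
    (h_u_r2 : ¬G.Adj u r2)
    (h_u_x : G.Adj u x)
    (h_u_y : G.Adj u y)
    (h_s_p1 : ¬G.Adj s p1)
    (h_s_p2 : ¬G.Adj s p2)
    (h_s_q1 : ¬G.Adj s q1)
    (h_s_q2 : ¬G.Adj s q2)
    (h_s_r1 : ¬G.Adj s r1)
    (h_s_r2 : ¬G.Adj s r2)
    (h_p1_p2 : G.Adj p1 p2)
    (h_p1_q1 : G.Adj p1 q1)
    (h_p1_q2 : ¬G.Adj p1 q2)
    (h_p1_r1 : ¬G.Adj p1 r1)
    (h_p1_r2 : ¬G.Adj p1 r2)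
    (h_p1_x : G.Adj p1 x)
    (h_p1_y : G.Adj p1 y)
    (h_p2_q1 : ¬G.Adj p2 q1)
    (h_p2_q2 : G.Adj p2 q2)
    (h_p2_r1 : ¬G.Adj p2 r1)
    (h_p2_r2 : ¬G.Adj p2 r2)
    (h_q1_q2 : ¬G.Adj q1 q2)
    (h_q1_r1 : G.Adj q1 r1)
    (h_q1_r2 : ¬G.Adj q1 r2)
    (h_q2_r1 : ¬G.Adj q2 r1)
    (h_q2_r2 : G.Adj q2 r2)
    (h_r1_r2 : ¬G.Adj r1 r2)
    (h_x_y : ¬G.Adj x y)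
    (d_x_y : x ≠ y)
    (d_xp2 : x ≠ p2) (d_yp2 : y ≠ p2) : False := by
  have d_u_s : u ≠ s := h_u_s.ne
  have d_u_p1 : u ≠ p1 := h_u_p1.ne
  have d_u_p2 : u ≠ p2 := h_u_p2.ne
  have d_u_q1 : u ≠ q1 := by intro hh; subst hh; exact h_s_q1 h_u_s.symm
  have d_u_q2 : u ≠ q2 := by intro hh; subst hh; exact h_s_q2 h_u_s.symm
  have d_u_r1 : u ≠ r1 := by intro hh; subst hh; exact h_s_r1 h_u_s.symm
  have d_u_r2 : u ≠ r2 := by intro hh; subst hh; exact h_s_r2 h_u_s.symm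
  have d_u_x : u ≠ x := h_u_x.ne
  have d_u_y : u ≠ y := h_u_y.ne
  have d_s_p1 : s ≠ p1 := by intro hh; subst hh; exact h_s_p2 h_p1_p2
  have d_s_p2 : s ≠ p2 := by intro hh; subst hh; exact h_s_p1 h_p1_p2.symm
  have d_s_q1 : s ≠ q1 := by intro hh; subst hh; exact h_u_q1 h_u_s
  have d_s_q2 : s ≠ q2 := by intro hh; subst hh; exact h_u_q2 h_u_s
  have d_s_r1 : s ≠ r1 := by intro hh; subst hh; exact h_u_r1 h_u_s
  have d_s_r2 : s ≠ r2 := by intro hh; subst hh; exact h_u_r2 h_u_s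
  have d_s_x : s ≠ x := by intro hh; subst hh; exact h_s_p1 h_p1_x.symm
  have d_s_y : s ≠ y := by intro hh; subst hh; exact h_s_p1 h_p1_y.symm
  have d_p1_p2 : p1 ≠ p2 := h_p1_p2.ne
  have d_p1_q1 : p1 ≠ q1 := h_p1_q1.ne
  have d_p1_q2 : p1 ≠ q2 := by intro hh; subst hh; exact h_u_q2 h_u_p1
  have d_p1_r1 : p1 ≠ r1 := by intro hh; subst hh; exact h_u_r1 h_u_p1
  have d_p1_r2 : p1 ≠ r2 := by intro hh; subst hh; exact h_u_r2 h_u_p1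
  have d_p1_x : p1 ≠ x := h_p1_x.ne
  have d_p1_y : p1 ≠ y := h_p1_y.ne
  have d_p2_q1 : p2 ≠ q1 := by intro hh; subst hh; exact h_u_q1 h_u_p2
  have d_p2_q2 : p2 ≠ q2 := h_p2_q2.ne
  have d_p2_r1 : p2 ≠ r1 := by intro hh; subst hh; exact h_u_r1 h_u_p2
  have d_p2_r2 : p2 ≠ r2 := by intro hh; subst hh; exact h_u_r2 h_u_p2
  have d_q1_q2 : q1 ≠ q2 := by intro hh; subst hh; exact h_p1_q2 h_p1_q1
  have d_q1_r1 : q1 ≠ r1 := h_q1_r1.ne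
  have d_q1_r2 : q1 ≠ r2 := by intro hh; subst hh; exact h_p1_r2 h_p1_q1
  have d_q1_x : q1 ≠ x := by intro hh; subst hh; exact h_u_q1 h_u_x
  have d_q1_y : q1 ≠ y := by intro hh; subst hh; exact h_u_q1 h_u_y
  have d_q2_r1 : q2 ≠ r1 := by intro hh; subst hh; exact h_p2_r1 h_p2_q2
  have d_q2_r2 : q2 ≠ r2 := h_q2_r2.ne
  have d_q2_x : q2 ≠ x := by intro hh; subst hh; exact h_u_q2 h_u_x
  have d_q2_y : q2 ≠ y := by intro hh; subst hh; exact h_u_q2 h_u_y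
  have d_r1_r2 : r1 ≠ r2 := by intro hh; subst hh; exact h_q1_r2 h_q1_r1
  have d_r1_x : r1 ≠ x := by intro hh; subst hh; exact h_u_r1 h_u_x
  have d_r1_y : r1 ≠ y := by intro hh; subst hh; exact h_u_r1 h_u_y
  have d_r2_x : r2 ≠ x := by intro hh; subst hh; exact h_u_r2 h_u_x
  have d_r2_y : r2 ≠ y := by intro hh; subst hh; exact h_u_r2 h_u_y
  by_cases h_q2_x : G.Adj q2 x
  · -- h_q2_x true
    by_cases h_r2_x : G.Adj r2 x
    · -- h_r2_x true
      exact no_butterfly hbf d_p1_q2 d_p1_r2 d_u_q2 d_u_r2 h_p1_x.symm h_u_x.symm h_q2_x.symm h_r2_x.symm h_u_p1.symm h_q2_r2 h_p1_q2 h_p1_r2 h_u_q2 h_u_r2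
    · -- h_r2_x false
      by_cases h_s_x : G.Adj s x
      · -- h_s_x true
        exact no_fork hfork d_s_p1.symm d_p1_q2 d_s_q2 d_r2_x.symm d_p1_r2 d_s_r2 h_p1_x.symm h_s_x.symm h_q2_x.symm h_q2_r2 (fun hh => h_s_p1 hh.symm) h_p1_q2 h_s_q2 (fun hh => h_r2_x hh.symm) h_p1_r2 h_s_r2
      · -- h_s_x false
        by_cases h_r1_x : G.Adj r1 x
        · -- h_r1_x true
          exact no_fork hfork d_p1_r1 d_p1_q2 d_q2_r1.symm d_r2_x.symm d_p1_r2 d_r1_r2 h_p1_x.symm h_r1_x.symm h_q2_x.symm h_q2_r2 h_p1_r1 h_p1_q2 (fun hh => h_q2_r1 hh.symm) (fun hh => h_r2_x hh.symm) h_p1_r2 h_r1_r2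
        · -- h_r1_x false
          by_cases h_q1_x : G.Adj q1 x
          · -- h_q1_x true
            exact no_fork hfork d_u_q1.symm d_q1_q2 d_u_q2 d_r2_x.symm d_q1_r2 d_u_r2 h_q1_x.symm h_u_x.symm h_q2_x.symm h_q2_r2 (fun hh => h_u_q1 hh.symm) h_q1_q2 h_u_q2 (fun hh => h_r2_x hh.symm) h_q1_r2 h_u_r2
          · -- h_q1_x false
            by_cases h_p2_x : G.Adj p2 x
            · -- h_p2_x true
              by_cases h_q1_y : G.Adj q1 y
              · -- h_q1_y true
                by_cases h_s_y : G.Adj s y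
                · -- h_s_y true
                  by_cases h_p2_y : G.Adj p2 y
                  · -- h_p2_y true
                    exact no_fork hfork d_s_q1.symm d_p2_q1.symm d_s_p2 d_x_y.symm d_q1_x d_s_x h_q1_y.symm h_s_y.symm h_p2_y.symm h_p2_x (fun hh => h_s_q1 hh.symm) (fun hh => h_p2_q1 hh.symm) h_s_p2 (fun hh => h_x_y hh.symm) h_q1_x h_s_x
                  · -- h_p2_y false
                    exact no_butterfly hbf d_s_p2.symm d_yp2.symm d_s_x.symm d_x_y h_u_p2 h_u_x h_u_s h_u_y h_p2_x h_s_y (fun hh => h_s_p2 hh.symm) h_p2_y (fun hh => h_s_x hh.symm) h_x_y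
                · -- h_s_y false
                  exact no_fork hfork d_s_x d_s_y d_x_y d_u_q1 d_s_q1 d_q1_x.symm h_u_s h_u_x h_u_y h_q1_y.symm h_s_x h_s_y h_x_y h_u_q1 h_s_q1 (fun hh => h_q1_x hh.symm)
              · -- h_q1_y false
                by_cases h_s_y : G.Adj s y
                · -- h_s_y true
                  exact no_fork hfork d_q1_x d_q1_y d_x_y d_s_p1.symm d_s_q1.symm d_s_x.symm h_p1_q1 h_p1_x h_p1_y h_s_y.symm h_q1_x h_q1_y h_x_y (fun hh => h_s_p1 hh.symm) (fun hh => h_s_q1 hh.symm) (fun hh => h_s_x hh.symm)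
                · -- h_s_y false
                  by_cases h_r1_y : G.Adj r1 y
                  · -- h_r1_y true
                    exact no_fork hfork d_s_x d_s_y d_x_y d_u_r1 d_s_r1 d_r1_x.symm h_u_s h_u_x h_u_y h_r1_y.symm h_s_x h_s_y h_x_y h_u_r1 h_s_r1 (fun hh => h_r1_x hh.symm)
                  · -- h_r1_y false
                    exact no_fork hfork d_x_y d_q1_x.symm d_q1_y.symm d_p1_r1 d_r1_x.symm d_r1_y.symm h_p1_x h_p1_y h_p1_q1 h_q1_r1 h_x_y (fun hh => h_q1_x hh.symm) (fun hh => h_q1_y hh.symm) h_p1_r1 (fun hh => h_r1_x hh.symm) (fun hh => h_r1_y hh.symm)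
            · -- h_p2_x false
              exact no_fork hfork d_xp2.symm d_p2_q1 d_q1_x.symm d_p1_r1 d_p2_r1 d_r1_x.symm h_p1_p2 h_p1_x h_p1_q1 h_q1_r1 h_p2_x h_p2_q1 (fun hh => h_q1_x hh.symm) h_p1_r1 h_p2_r1 (fun hh => h_r1_x hh.symm)
  · -- h_q2_x false
    by_cases h_s_x : G.Adj s x
    · -- h_s_x true
      by_cases h_r2_x : G.Adj r2 x
      · -- h_r2_x true
        exact no_fork hfork d_s_p1.symm d_p1_r2 d_s_r2 d_q2_x.symm d_p1_q2 d_s_q2 h_p1_x.symm h_s_x.symm h_r2_x.symm h_q2_r2.symm (fun hh => h_s_p1 hh.symm) h_p1_r2 h_s_r2 (fun hh => h_q2_x hh.symm) h_p1_q2 h_s_q2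
      · -- h_r2_x false
        by_cases h_p2_x : G.Adj p2 x
        · -- h_p2_x true
          by_cases h_q1_x : G.Adj q1 x
          · -- h_q1_x true
            exact no_fork hfork d_s_q1.symm d_p2_q1.symm d_s_p2 d_q2_x.symm d_q1_q2 d_s_q2 h_q1_x.symm h_s_x.symm h_p2_x.symm h_p2_q2 (fun hh => h_s_q1 hh.symm) (fun hh => h_p2_q1 hh.symm) h_s_p2 (fun hh => h_q2_x hh.symm) h_q1_q2 h_s_q2
          · -- h_q1_x false
            by_cases h_r1_x : G.Adj r1 x
            · -- h_r1_x true
              exact no_fork hfork d_s_p2.symm d_p2_r1 d_s_r1 d_q1_x.symm d_p2_q1 d_s_q1 h_p2_x.symm h_s_x.symm h_r1_x.symm h_q1_r1.symm (fun hh => h_s_p2 hh.symm) h_p2_r1 h_s_r1 (fun hh => h_q1_x hh.symm) h_p2_q1 h_s_q1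
            · -- h_r1_x false
              by_cases h_q2_y : G.Adj q2 y
              · -- h_q2_y true
                by_cases h_q1_y : G.Adj q1 y
                · -- h_q1_y true
                  exact no_fork hfork d_q1_q2 d_u_q1.symm d_u_q2.symm d_x_y.symm d_q1_x d_q2_x h_q1_y.symm h_q2_y.symm h_u_y.symm h_u_x h_q1_q2 (fun hh => h_u_q1 hh.symm) (fun hh => h_u_q2 hh.symm) (fun hh => h_x_y hh.symm) h_q1_x h_q2_x
                · -- h_q1_y false
                  exact no_fork hfork d_q1_x d_q1_y d_x_y d_p1_q2 d_q1_q2 d_q2_x.symm h_p1_q1 h_p1_x h_p1_y h_q2_y.symm h_q1_x h_q1_y h_x_y h_p1_q2 h_q1_q2 (fun hh => h_q2_x hh.symm)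
              · -- h_q2_y false
                by_cases h_s_y : G.Adj s y
                · -- h_s_y true
                  by_cases h_r2_y : G.Adj r2 y
                  · -- h_r2_y true
                    exact no_fork hfork d_s_p1.symm d_p1_r2 d_s_r2 d_q2_y.symm d_p1_q2 d_s_q2 h_p1_y.symm h_s_y.symm h_r2_y.symm h_q2_r2.symm (fun hh => h_s_p1 hh.symm) h_p1_r2 h_s_r2 (fun hh => h_q2_y hh.symm) h_p1_q2 h_s_q2
                  · -- h_r2_y false
                    by_cases h_p2_y : G.Adj p2 y
                    · -- h_p2_y true
                      exact no_fork hfork d_x_y d_q2_x.symm d_q2_y.symm d_p2_r2 d_r2_x.symm d_r2_y.symm h_p2_x h_p2_y h_p2_q2 h_q2_r2 h_x_y (fun hh => h_q2_x hh.symm) (fun hh => h_q2_y hh.symm) h_p2_r2 (fun hh => h_r2_x hh.symm) (fun hh => h_r2_y hh.symm)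
                    · -- h_p2_y false
                      by_cases h_q1_y : G.Adj q1 y
                      · -- h_q1_y true
                        exact no_butterfly hbf d_p2_q1 d_yp2.symm d_q1_x.symm d_x_y h_p1_p2 h_p1_x h_p1_q1 h_p1_y h_p2_x h_q1_y h_p2_q1 h_p2_y (fun hh => h_q1_x hh.symm) h_x_y
                      · -- h_q1_y false
                        exact no_fork hfork d_p2_q1 d_yp2.symm d_q1_y d_s_p1.symm d_s_p2.symm d_s_q1.symm h_p1_p2 h_p1_q1 h_p1_y h_s_y.symm h_p2_q1 h_p2_y h_q1_y (fun hh => h_s_p1 hh.symm) (fun hh => h_s_p2 hh.symm) (fun hh => h_s_q1 hh.symm)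
                · -- h_s_y false
                  by_cases h_p2_y : G.Adj p2 y
                  · -- h_p2_y true
                    exact no_fork hfork d_q2_y d_q2_x d_x_y.symm d_s_p2.symm d_s_q2.symm d_s_y.symm h_p2_q2 h_p2_y h_p2_x h_s_x.symm h_q2_y h_q2_x (fun hh => h_x_y hh.symm) (fun hh => h_s_p2 hh.symm) (fun hh => h_s_q2 hh.symm) (fun hh => h_s_y hh.symm)
                  · -- h_p2_y false
                    exact no_fork hfork d_s_y d_s_p2 d_yp2 d_u_q2 d_s_q2 d_q2_y.symm h_u_s h_u_y h_u_p2 h_p2_q2 h_s_y h_s_p2 (fun hh => h_p2_y hh.symm) h_u_q2 h_s_q2 (fun hh => h_q2_y hh.symm)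
        · -- h_p2_x false
          by_cases h_q1_x : G.Adj q1 x
          · -- h_q1_x true
            by_cases h_r1_x : G.Adj r1 x
            · -- h_r1_x true
              exact no_fork hfork d_s_r1.symm d_p1_r1.symm d_s_p1 d_xp2 d_p2_r1.symm d_s_p2 h_r1_x.symm h_s_x.symm h_p1_x.symm h_p1_p2 (fun hh => h_s_r1 hh.symm) (fun hh => h_p1_r1 hh.symm) h_s_p1 (fun hh => h_p2_x hh.symm) (fun hh => h_p2_r1 hh.symm) h_s_p2
            · -- h_r1_x false
              by_cases h_r1_y : G.Adj r1 y
              · -- h_r1_y true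
                by_cases h_p2_y : G.Adj p2 y
                · -- h_p2_y true
                  by_cases h_s_y : G.Adj s y
                  · -- h_s_y true
                    exact no_fork hfork d_p2_r1 d_s_p2.symm d_s_r1.symm d_x_y.symm d_xp2.symm d_r1_x h_p2_y.symm h_r1_y.symm h_s_y.symm h_s_x h_p2_r1 (fun hh => h_s_p2 hh.symm) (fun hh => h_s_r1 hh.symm) (fun hh => h_x_y hh.symm) h_p2_x h_r1_x
                  · -- h_s_y false
                    exact no_butterfly hbf d_s_p2.symm d_xp2.symm d_s_y.symm d_x_y.symm h_u_p2 h_u_y h_u_s h_u_x h_p2_y h_s_x (fun hh => h_s_p2 hh.symm) h_p2_x (fun hh => h_s_y hh.symm) (fun hh => h_x_y hh.symm)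
                · -- h_p2_y false
                  exact no_fork hfork d_xp2.symm d_yp2.symm d_x_y d_u_r1 d_p2_r1 d_r1_x.symm h_u_p2 h_u_x h_u_y h_r1_y.symm h_p2_x h_p2_y h_x_y h_u_r1 h_p2_r1 (fun hh => h_r1_x hh.symm)
              · -- h_r1_y false
                by_cases h_r2_y : G.Adj r2 y
                · -- h_r2_y true
                  by_cases h_p2_y : G.Adj p2 y
                  · -- h_p2_y true
                    by_cases h_q1_y : G.Adj q1 y
                    · -- h_q1_y true
                      exact no_fork hfork d_r1_x d_r1_y d_x_y d_p2_q1.symm d_p2_r1.symm d_xp2 h_q1_r1 h_q1_x h_q1_y h_p2_y.symm h_r1_x h_r1_y h_x_y (fun hh => h_p2_q1 hh.symm) (fun hh => h_p2_r1 hh.symm) (fun hh => h_p2_x hh.symm)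
                    · -- h_q1_y false
                      exact no_butterfly hbf d_p2_q1 d_xp2.symm d_q1_y.symm d_x_y.symm h_p1_p2 h_p1_y h_p1_q1 h_p1_x h_p2_y h_q1_x h_p2_q1 h_p2_x (fun hh => h_q1_y hh.symm) (fun hh => h_x_y hh.symm)
                  · -- h_p2_y false
                    exact no_fork hfork d_xp2.symm d_yp2.symm d_x_y d_u_r2 d_p2_r2 d_r2_x.symm h_u_p2 h_u_x h_u_y h_r2_y.symm h_p2_x h_p2_y h_x_y h_u_r2 h_p2_r2 (fun hh => h_r2_x hh.symm)
                · -- h_r2_y false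
                  by_cases h_p2_y : G.Adj p2 y
                  · -- h_p2_y true
                    by_cases h_q1_y : G.Adj q1 y
                    · -- h_q1_y true
                      exact no_fork hfork d_r1_x d_r1_y d_x_y d_p2_q1.symm d_p2_r1.symm d_xp2 h_q1_r1 h_q1_x h_q1_y h_p2_y.symm h_r1_x h_r1_y h_x_y (fun hh => h_p2_q1 hh.symm) (fun hh => h_p2_r1 hh.symm) (fun hh => h_p2_x hh.symm)
                    · -- h_q1_y false
                      exact no_butterfly hbf d_p2_q1 d_xp2.symm d_q1_y.symm d_x_y.symm h_p1_p2 h_p1_y h_p1_q1 h_p1_x h_p2_y h_q1_x h_p2_q1 h_p2_x (fun hh => h_q1_y hh.symm) (fun hh => h_x_y hh.symm)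
                  · -- h_p2_y false
                    by_cases h_q1_y : G.Adj q1 y
                    · -- h_q1_y true
                      by_cases h_s_y : G.Adj s y
                      · -- h_s_y true
                        by_cases h_q2_y : G.Adj q2 y
                        · -- h_q2_y true
                          exact no_fork hfork d_r1_x d_r1_y d_x_y d_q1_q2 d_q2_r1.symm d_q2_x.symm h_q1_r1 h_q1_x h_q1_y h_q2_y.symm h_r1_x h_r1_y h_x_y h_q1_q2 (fun hh => h_q2_r1 hh.symm) (fun hh => h_q2_x hh.symm)
                        · -- h_q2_y false
                          exact no_fork hfork d_x_y d_xp2 d_yp2 d_u_q2 d_q2_x.symm d_q2_y.symm h_u_x h_u_y h_u_p2 h_p2_q2 h_x_y (fun hh => h_p2_x hh.symm) (fun hh => h_p2_y hh.symm) h_u_q2 (fun hh => h_q2_x hh.symm) (fun hh => h_q2_y hh.symm)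
                      · -- h_s_y false
                        exact no_fork hfork d_s_p2.symm d_yp2.symm d_s_y d_u_q1 d_p2_q1 d_s_q1 h_u_p2 h_u_s h_u_y h_q1_y.symm (fun hh => h_s_p2 hh.symm) h_p2_y h_s_y h_u_q1 h_p2_q1 h_s_q1
                    · -- h_q1_y false
                      exact no_fork hfork d_yp2.symm d_xp2.symm d_x_y.symm d_u_q1 d_p2_q1 d_q1_y.symm h_u_p2 h_u_y h_u_x h_q1_x.symm h_p2_y h_p2_x (fun hh => h_x_y hh.symm) h_u_q1 h_p2_q1 (fun hh => h_q1_y hh.symm)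
          · -- h_q1_x false
            exact no_fork hfork d_p2_q1 d_xp2.symm d_q1_x d_s_p1.symm d_s_p2.symm d_s_q1.symm h_p1_p2 h_p1_q1 h_p1_x h_s_x.symm h_p2_q1 h_p2_x h_q1_x (fun hh => h_s_p1 hh.symm) (fun hh => h_s_p2 hh.symm) (fun hh => h_s_q1 hh.symm)
    · -- h_s_x false
      by_cases h_p2_x : G.Adj p2 x
      · -- h_p2_x true
        by_cases h_q2_y : G.Adj q2 y
        · -- h_q2_y true
          by_cases h_s_y : G.Adj s y
          · -- h_s_y true
            exact no_fork hfork d_s_q2.symm d_p1_q2.symm d_s_p1 d_x_y.symm d_q2_x d_s_x h_q2_y.symm h_s_y.symm h_p1_y.symm h_p1_x (fun hh => h_s_q2 hh.symm) (fun hh => h_p1_q2 hh.symm) h_s_p1 (fun hh => h_x_y hh.symm) h_q2_x h_s_x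
          · -- h_s_y false
            exact no_fork hfork d_s_x d_s_y d_x_y d_u_q2 d_s_q2 d_q2_x.symm h_u_s h_u_x h_u_y h_q2_y.symm h_s_x h_s_y h_x_y h_u_q2 h_s_q2 (fun hh => h_q2_x hh.symm)
        · -- h_q2_y false
          by_cases h_s_y : G.Adj s y
          · -- h_s_y true
            by_cases h_p2_y : G.Adj p2 y
            · -- h_p2_y true
              exact no_fork hfork d_q2_x d_q2_y d_x_y d_s_p2.symm d_s_q2.symm d_s_x.symm h_p2_q2 h_p2_x h_p2_y h_s_y.symm h_q2_x h_q2_y h_x_y (fun hh => h_s_p2 hh.symm) (fun hh => h_s_q2 hh.symm) (fun hh => h_s_x hh.symm)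
            · -- h_p2_y false
              exact no_butterfly hbf d_s_p2.symm d_yp2.symm d_s_x.symm d_x_y h_u_p2 h_u_x h_u_s h_u_y h_p2_x h_s_y (fun hh => h_s_p2 hh.symm) h_p2_y (fun hh => h_s_x hh.symm) h_x_y
          · -- h_s_y false
            by_cases h_p2_y : G.Adj p2 y
            · -- h_p2_y true
              by_cases h_q1_y : G.Adj q1 y
              · -- h_q1_y true
                by_cases h_q1_x : G.Adj q1 x
                · -- h_q1_x true
                  by_cases h_r2_x : G.Adj r2 x
                  · -- h_r2_x true
                    exact no_fork hfork d_u_q1.symm d_q1_r2 d_u_r2 d_q2_x.symm d_q1_q2 d_u_q2 h_q1_x.symm h_u_x.symm h_r2_x.symm h_q2_r2.symm (fun hh => h_u_q1 hh.symm) h_q1_r2 h_u_r2 (fun hh => h_q2_x hh.symm) h_q1_q2 h_u_q2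
                  · -- h_r2_x false
                    by_cases h_r2_y : G.Adj r2 y
                    · -- h_r2_y true
                      exact no_fork hfork d_s_x d_s_y d_x_y d_u_r2 d_s_r2 d_r2_x.symm h_u_s h_u_x h_u_y h_r2_y.symm h_s_x h_s_y h_x_y h_u_r2 h_s_r2 (fun hh => h_r2_x hh.symm)
                    · -- h_r2_y false
                      exact no_fork hfork d_x_y d_q2_x.symm d_q2_y.symm d_p2_r2 d_r2_x.symm d_r2_y.symm h_p2_x h_p2_y h_p2_q2 h_q2_r2 h_x_y (fun hh => h_q2_x hh.symm) (fun hh => h_q2_y hh.symm) h_p2_r2 (fun hh => h_r2_x hh.symm) (fun hh => h_r2_y hh.symm)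
                · -- h_q1_x false
                  exact no_fork hfork d_s_x d_s_y d_x_y d_u_q1 d_s_q1 d_q1_x.symm h_u_s h_u_x h_u_y h_q1_y.symm h_s_x h_s_y h_x_y h_u_q1 h_s_q1 (fun hh => h_q1_x hh.symm)
              · -- h_q1_y false
                by_cases h_q1_x : G.Adj q1 x
                · -- h_q1_x true
                  exact no_fork hfork d_s_y d_s_x d_x_y.symm d_u_q1 d_s_q1 d_q1_y.symm h_u_s h_u_y h_u_x h_q1_x.symm h_s_y h_s_x (fun hh => h_x_y hh.symm) h_u_q1 h_s_q1 (fun hh => h_q1_y hh.symm)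
                · -- h_q1_x false
                  by_cases h_r1_y : G.Adj r1 y
                  · -- h_r1_y true
                    by_cases h_r1_x : G.Adj r1 x
                    · -- h_r1_x true
                      by_cases h_r2_x : G.Adj r2 x
                      · -- h_r2_x true
                        exact no_fork hfork d_p1_r1 d_p1_r2 d_r1_r2 d_q2_x.symm d_p1_q2 d_q2_r1.symm h_p1_x.symm h_r1_x.symm h_r2_x.symm h_q2_r2.symm h_p1_r1 h_p1_r2 h_r1_r2 (fun hh => h_q2_x hh.symm) h_p1_q2 (fun hh => h_q2_r1 hh.symm)
                      · -- h_r2_x false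
                        by_cases h_r2_y : G.Adj r2 y
                        · -- h_r2_y true
                          exact no_fork hfork d_s_x d_s_y d_x_y d_u_r2 d_s_r2 d_r2_x.symm h_u_s h_u_x h_u_y h_r2_y.symm h_s_x h_s_y h_x_y h_u_r2 h_s_r2 (fun hh => h_r2_x hh.symm)
                        · -- h_r2_y false
                          exact no_fork hfork d_x_y d_q2_x.symm d_q2_y.symm d_p2_r2 d_r2_x.symm d_r2_y.symm h_p2_x h_p2_y h_p2_q2 h_q2_r2 h_x_y (fun hh => h_q2_x hh.symm) (fun hh => h_q2_y hh.symm) h_p2_r2 (fun hh => h_r2_x hh.symm) (fun hh => h_r2_y hh.symm)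
                    · -- h_r1_x false
                      exact no_fork hfork d_s_x d_s_y d_x_y d_u_r1 d_s_r1 d_r1_x.symm h_u_s h_u_x h_u_y h_r1_y.symm h_s_x h_s_y h_x_y h_u_r1 h_s_r1 (fun hh => h_r1_x hh.symm)
                  · -- h_r1_y false
                    by_cases h_r1_x : G.Adj r1 x
                    · -- h_r1_x true
                      exact no_fork hfork d_s_y d_s_x d_x_y.symm d_u_r1 d_s_r1 d_r1_y.symm h_u_s h_u_y h_u_x h_r1_x.symm h_s_y h_s_x (fun hh => h_x_y hh.symm) h_u_r1 h_s_r1 (fun hh => h_r1_y hh.symm)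
                    · -- h_r1_x false
                      exact no_fork hfork d_x_y d_q1_x.symm d_q1_y.symm d_p1_r1 d_r1_x.symm d_r1_y.symm h_p1_x h_p1_y h_p1_q1 h_q1_r1 h_x_y (fun hh => h_q1_x hh.symm) (fun hh => h_q1_y hh.symm) h_p1_r1 (fun hh => h_r1_x hh.symm) (fun hh => h_r1_y hh.symm)
            · -- h_p2_y false
              exact no_fork hfork d_s_y d_s_p2 d_yp2 d_u_q2 d_s_q2 d_q2_y.symm h_u_s h_u_y h_u_p2 h_p2_q2 h_s_y h_s_p2 (fun hh => h_p2_y hh.symm) h_u_q2 h_s_q2 (fun hh => h_q2_y hh.symm)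
      · -- h_p2_x false
        exact no_fork hfork d_s_x d_s_p2 d_xp2 d_u_q2 d_s_q2 d_q2_x.symm h_u_s h_u_x h_u_p2 h_p2_q2 h_s_x h_s_p2 (fun hh => h_p2_x hh.symm) h_u_q2 h_s_q2 (fun hh => h_q2_x hh.symm)

lemma pair_five (hfork : HFree G fork) (hbf : HFree G butterfly)
    (u s p1 p2 q1 q2 r x y : V)
    (h_u_s : G.Adj u s)
    (h_u_p1 : G.Adj u p1)
    (h_u_p2 : G.Adj u p2)
    (h_u_q1 : ¬G.Adj u q1)
    (h_u_q2 : ¬G.Adj u q2)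
    (h_u_r : ¬G.Adj u r)
    (h_u_x : G.Adj u x)
    (h_u_y : G.Adj u y)
    (h_s_p1 : ¬G.Adj s p1)
    (h_s_p2 : ¬G.Adj s p2)
    (h_s_q1 : ¬G.Adj s q1)
    (h_s_q2 : ¬G.Adj s q2)
    (h_s_r : ¬G.Adj s r)
    (h_p1_p2 : G.Adj p1 p2)
    (h_p1_q1 : G.Adj p1 q1)
    (h_p1_q2 : ¬G.Adj p1 q2)
    (h_p1_r : ¬G.Adj p1 r)
    (h_p1_x : G.Adj p1 x)
    (h_p1_y : G.Adj p1 y)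
    (h_p2_q1 : ¬G.Adj p2 q1)
    (h_p2_q2 : G.Adj p2 q2)
    (h_p2_r : ¬G.Adj p2 r)
    (h_q1_q2 : ¬G.Adj q1 q2)
    (h_q1_r : G.Adj q1 r)
    (h_q2_r : G.Adj q2 r)
    (h_x_y : ¬G.Adj x y)
    (d_x_y : x ≠ y)
    (d_xp2 : x ≠ p2) (d_yp2 : y ≠ p2) : False := by
  have d_u_s : u ≠ s := h_u_s.ne
  have d_u_p1 : u ≠ p1 := h_u_p1.ne
  have d_u_p2 : u ≠ p2 := h_u_p2.ne
  have d_u_q1 : u ≠ q1 := by intro hh; subst hh; exact h_s_q1 h_u_s.symm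
  have d_u_q2 : u ≠ q2 := by intro hh; subst hh; exact h_s_q2 h_u_s.symm
  have d_u_r : u ≠ r := by intro hh; subst hh; exact h_s_r h_u_s.symm
  have d_u_x : u ≠ x := h_u_x.ne
  have d_u_y : u ≠ y := h_u_y.ne
  have d_s_p1 : s ≠ p1 := by intro hh; subst hh; exact h_s_p2 h_p1_p2
  have d_s_p2 : s ≠ p2 := by intro hh; subst hh; exact h_s_p1 h_p1_p2.symm
  have d_s_q1 : s ≠ q1 := by intro hh; subst hh; exact h_u_q1 h_u_s
  have d_s_q2 : s ≠ q2 := by intro hh; subst hh; exact h_u_q2 h_u_s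
  have d_s_r : s ≠ r := by intro hh; subst hh; exact h_u_r h_u_s
  have d_s_x : s ≠ x := by intro hh; subst hh; exact h_s_p1 h_p1_x.symm
  have d_s_y : s ≠ y := by intro hh; subst hh; exact h_s_p1 h_p1_y.symm
  have d_p1_p2 : p1 ≠ p2 := h_p1_p2.ne
  have d_p1_q1 : p1 ≠ q1 := h_p1_q1.ne
  have d_p1_q2 : p1 ≠ q2 := by intro hh; subst hh; exact h_u_q2 h_u_p1
  have d_p1_r : p1 ≠ r := by intro hh; subst hh; exact h_u_r h_u_p1
  have d_p1_x : p1 ≠ x := h_p1_x.ne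
  have d_p1_y : p1 ≠ y := h_p1_y.ne
  have d_p2_q1 : p2 ≠ q1 := by intro hh; subst hh; exact h_u_q1 h_u_p2
  have d_p2_q2 : p2 ≠ q2 := h_p2_q2.ne
  have d_p2_r : p2 ≠ r := by intro hh; subst hh; exact h_u_r h_u_p2
  have d_q1_q2 : q1 ≠ q2 := by intro hh; subst hh; exact h_p1_q2 h_p1_q1
  have d_q1_r : q1 ≠ r := h_q1_r.ne
  have d_q1_x : q1 ≠ x := by intro hh; subst hh; exact h_u_q1 h_u_x
  have d_q1_y : q1 ≠ y := by intro hh; subst hh; exact h_u_q1 h_u_y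
  have d_q2_r : q2 ≠ r := h_q2_r.ne
  have d_q2_x : q2 ≠ x := by intro hh; subst hh; exact h_u_q2 h_u_x
  have d_q2_y : q2 ≠ y := by intro hh; subst hh; exact h_u_q2 h_u_y
  have d_r_x : r ≠ x := by intro hh; subst hh; exact h_u_r h_u_x
  have d_r_y : r ≠ y := by intro hh; subst hh; exact h_u_r h_u_y
  by_cases h_q2_x : G.Adj q2 x
  · -- h_q2_x true
    by_cases h_r_x : G.Adj r x
    · -- h_r_x true
      exact no_butterfly hbf d_p1_q2 d_p1_r d_u_q2 d_u_r h_p1_x.symm h_u_x.symm h_q2_x.symm h_r_x.symm h_u_p1.symm h_q2_r h_p1_q2 h_p1_r h_u_q2 h_u_r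
    · -- h_r_x false
      by_cases h_s_x : G.Adj s x
      · -- h_s_x true
        exact no_fork hfork d_s_p1.symm d_p1_q2 d_s_q2 d_r_x.symm d_p1_r d_s_r h_p1_x.symm h_s_x.symm h_q2_x.symm h_q2_r (fun hh => h_s_p1 hh.symm) h_p1_q2 h_s_q2 (fun hh => h_r_x hh.symm) h_p1_r h_s_r
      · -- h_s_x false
        by_cases h_q1_x : G.Adj q1 x
        · -- h_q1_x true
          exact no_fork hfork d_q1_q2 d_u_q1.symm d_u_q2.symm d_s_x.symm d_s_q1.symm d_s_q2.symm h_q1_x.symm h_q2_x.symm h_u_x.symm h_u_s h_q1_q2 (fun hh => h_u_q1 hh.symm) (fun hh => h_u_q2 hh.symm) (fun hh => h_s_x hh.symm) (fun hh => h_s_q1 hh.symm) (fun hh => h_s_q2 hh.symm)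
        · -- h_q1_x false
          by_cases h_p2_x : G.Adj p2 x
          · -- h_p2_x true
            by_cases h_q1_y : G.Adj q1 y
            · -- h_q1_y true
              by_cases h_s_y : G.Adj s y
              · -- h_s_y true
                by_cases h_p2_y : G.Adj p2 y
                · -- h_p2_y true
                  exact no_fork hfork d_s_q1.symm d_p2_q1.symm d_s_p2 d_x_y.symm d_q1_x d_s_x h_q1_y.symm h_s_y.symm h_p2_y.symm h_p2_x (fun hh => h_s_q1 hh.symm) (fun hh => h_p2_q1 hh.symm) h_s_p2 (fun hh => h_x_y hh.symm) h_q1_x h_s_x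
                · -- h_p2_y false
                  exact no_butterfly hbf d_s_p2.symm d_yp2.symm d_s_x.symm d_x_y h_u_p2 h_u_x h_u_s h_u_y h_p2_x h_s_y (fun hh => h_s_p2 hh.symm) h_p2_y (fun hh => h_s_x hh.symm) h_x_y
              · -- h_s_y false
                exact no_fork hfork d_s_x d_s_y d_x_y d_u_q1 d_s_q1 d_q1_x.symm h_u_s h_u_x h_u_y h_q1_y.symm h_s_x h_s_y h_x_y h_u_q1 h_s_q1 (fun hh => h_q1_x hh.symm)
            · -- h_q1_y false
              by_cases h_s_y : G.Adj s y
              · -- h_s_y true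
                exact no_fork hfork d_q1_x d_q1_y d_x_y d_s_p1.symm d_s_q1.symm d_s_x.symm h_p1_q1 h_p1_x h_p1_y h_s_y.symm h_q1_x h_q1_y h_x_y (fun hh => h_s_p1 hh.symm) (fun hh => h_s_q1 hh.symm) (fun hh => h_s_x hh.symm)
              · -- h_s_y false
                by_cases h_r_y : G.Adj r y
                · -- h_r_y true
                  exact no_fork hfork d_s_x d_s_y d_x_y d_u_r d_s_r d_r_x.symm h_u_s h_u_x h_u_y h_r_y.symm h_s_x h_s_y h_x_y h_u_r h_s_r (fun hh => h_r_x hh.symm)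
                · -- h_r_y false
                  exact no_fork hfork d_x_y d_q1_x.symm d_q1_y.symm d_p1_r d_r_x.symm d_r_y.symm h_p1_x h_p1_y h_p1_q1 h_q1_r h_x_y (fun hh => h_q1_x hh.symm) (fun hh => h_q1_y hh.symm) h_p1_r (fun hh => h_r_x hh.symm) (fun hh => h_r_y hh.symm)
          · -- h_p2_x false
            exact no_fork hfork d_xp2.symm d_p2_q1 d_q1_x.symm d_p1_r d_p2_r d_r_x.symm h_p1_p2 h_p1_x h_p1_q1 h_q1_r h_p2_x h_p2_q1 (fun hh => h_q1_x hh.symm) h_p1_r h_p2_r (fun hh => h_r_x hh.symm)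
  · -- h_q2_x false
    by_cases h_s_x : G.Adj s x
    · -- h_s_x true
      by_cases h_r_x : G.Adj r x
      · -- h_r_x true
        exact no_fork hfork d_s_p1.symm d_p1_r d_s_r d_q2_x.symm d_p1_q2 d_s_q2 h_p1_x.symm h_s_x.symm h_r_x.symm h_q2_r.symm (fun hh => h_s_p1 hh.symm) h_p1_r h_s_r (fun hh => h_q2_x hh.symm) h_p1_q2 h_s_q2
      · -- h_r_x false
        by_cases h_p2_x : G.Adj p2 x
        · -- h_p2_x true
          by_cases h_q1_x : G.Adj q1 x
          · -- h_q1_x true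
            exact no_fork hfork d_s_p2.symm d_p2_q1 d_s_q1 d_r_x.symm d_p2_r d_s_r h_p2_x.symm h_s_x.symm h_q1_x.symm h_q1_r (fun hh => h_s_p2 hh.symm) h_p2_q1 h_s_q1 (fun hh => h_r_x hh.symm) h_p2_r h_s_r
          · -- h_q1_x false
            by_cases h_q2_y : G.Adj q2 y
            · -- h_q2_y true
              by_cases h_q1_y : G.Adj q1 y
              · -- h_q1_y true
                exact no_fork hfork d_q1_q2 d_u_q1.symm d_u_q2.symm d_x_y.symm d_q1_x d_q2_x h_q1_y.symm h_q2_y.symm h_u_y.symm h_u_x h_q1_q2 (fun hh => h_u_q1 hh.symm) (fun hh => h_u_q2 hh.symm) (fun hh => h_x_y hh.symm) h_q1_x h_q2_x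
              · -- h_q1_y false
                exact no_fork hfork d_q1_x d_q1_y d_x_y d_p1_q2 d_q1_q2 d_q2_x.symm h_p1_q1 h_p1_x h_p1_y h_q2_y.symm h_q1_x h_q1_y h_x_y h_p1_q2 h_q1_q2 (fun hh => h_q2_x hh.symm)
            · -- h_q2_y false
              by_cases h_s_y : G.Adj s y
              · -- h_s_y true
                by_cases h_r_y : G.Adj r y
                · -- h_r_y true
                  exact no_fork hfork d_s_p1.symm d_p1_r d_s_r d_q2_y.symm d_p1_q2 d_s_q2 h_p1_y.symm h_s_y.symm h_r_y.symm h_q2_r.symm (fun hh => h_s_p1 hh.symm) h_p1_r h_s_r (fun hh => h_q2_y hh.symm) h_p1_q2 h_s_q2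
                · -- h_r_y false
                  by_cases h_q1_y : G.Adj q1 y
                  · -- h_q1_y true
                    by_cases h_p2_y : G.Adj p2 y
                    · -- h_p2_y true
                      exact no_fork hfork d_q2_x d_q2_y d_x_y d_p2_q1 d_q1_q2.symm d_q1_x.symm h_p2_q2 h_p2_x h_p2_y h_q1_y.symm h_q2_x h_q2_y h_x_y h_p2_q1 (fun hh => h_q1_q2 hh.symm) (fun hh => h_q1_x hh.symm)
                    · -- h_p2_y false
                      exact no_butterfly hbf d_p2_q1 d_yp2.symm d_q1_x.symm d_x_y h_p1_p2 h_p1_x h_p1_q1 h_p1_y h_p2_x h_q1_y h_p2_q1 h_p2_y (fun hh => h_q1_x hh.symm) h_x_y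
                  · -- h_q1_y false
                    exact no_fork hfork d_x_y d_q1_x.symm d_q1_y.symm d_p1_r d_r_x.symm d_r_y.symm h_p1_x h_p1_y h_p1_q1 h_q1_r h_x_y (fun hh => h_q1_x hh.symm) (fun hh => h_q1_y hh.symm) h_p1_r (fun hh => h_r_x hh.symm) (fun hh => h_r_y hh.symm)
              · -- h_s_y false
                by_cases h_p2_y : G.Adj p2 y
                · -- h_p2_y true
                  exact no_fork hfork d_q2_y d_q2_x d_x_y.symm d_s_p2.symm d_s_q2.symm d_s_y.symm h_p2_q2 h_p2_y h_p2_x h_s_x.symm h_q2_y h_q2_x (fun hh => h_x_y hh.symm) (fun hh => h_s_p2 hh.symm) (fun hh => h_s_q2 hh.symm) (fun hh => h_s_y hh.symm)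
                · -- h_p2_y false
                  exact no_fork hfork d_s_y d_s_p2 d_yp2 d_u_q2 d_s_q2 d_q2_y.symm h_u_s h_u_y h_u_p2 h_p2_q2 h_s_y h_s_p2 (fun hh => h_p2_y hh.symm) h_u_q2 h_s_q2 (fun hh => h_q2_y hh.symm)
        · -- h_p2_x false
          by_cases h_q1_x : G.Adj q1 x
          · -- h_q1_x true
            by_cases h_r_y : G.Adj r y
            · -- h_r_y true
              by_cases h_p2_y : G.Adj p2 y
              · -- h_p2_y true
                by_cases h_s_y : G.Adj s y
                · -- h_s_y true
                  exact no_fork hfork d_p2_r d_s_p2.symm d_s_r.symm d_x_y.symm d_xp2.symm d_r_x h_p2_y.symm h_r_y.symm h_s_y.symm h_s_x h_p2_r (fun hh => h_s_p2 hh.symm) (fun hh => h_s_r hh.symm) (fun hh => h_x_y hh.symm) h_p2_x h_r_x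
                · -- h_s_y false
                  exact no_butterfly hbf d_s_p2.symm d_xp2.symm d_s_y.symm d_x_y.symm h_u_p2 h_u_y h_u_s h_u_x h_p2_y h_s_x (fun hh => h_s_p2 hh.symm) h_p2_x (fun hh => h_s_y hh.symm) (fun hh => h_x_y hh.symm)
              · -- h_p2_y false
                exact no_fork hfork d_xp2.symm d_yp2.symm d_x_y d_u_r d_p2_r d_r_x.symm h_u_p2 h_u_x h_u_y h_r_y.symm h_p2_x h_p2_y h_x_y h_u_r h_p2_r (fun hh => h_r_x hh.symm)
            · -- h_r_y false
              by_cases h_p2_y : G.Adj p2 y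
              · -- h_p2_y true
                by_cases h_q1_y : G.Adj q1 y
                · -- h_q1_y true
                  exact no_fork hfork d_r_x d_r_y d_x_y d_p2_q1.symm d_p2_r.symm d_xp2 h_q1_r h_q1_x h_q1_y h_p2_y.symm h_r_x h_r_y h_x_y (fun hh => h_p2_q1 hh.symm) (fun hh => h_p2_r hh.symm) (fun hh => h_p2_x hh.symm)
                · -- h_q1_y false
                  exact no_butterfly hbf d_p2_q1 d_xp2.symm d_q1_y.symm d_x_y.symm h_p1_p2 h_p1_y h_p1_q1 h_p1_x h_p2_y h_q1_x h_p2_q1 h_p2_x (fun hh => h_q1_y hh.symm) (fun hh => h_x_y hh.symm)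
              · -- h_p2_y false
                by_cases h_q1_y : G.Adj q1 y
                · -- h_q1_y true
                  by_cases h_s_y : G.Adj s y
                  · -- h_s_y true
                    by_cases h_q2_y : G.Adj q2 y
                    · -- h_q2_y true
                      exact no_fork hfork d_p2_r d_yp2.symm d_r_y d_s_q2.symm d_s_p2.symm d_s_r.symm h_p2_q2.symm h_q2_r h_q2_y h_s_y.symm h_p2_r h_p2_y h_r_y (fun hh => h_s_q2 hh.symm) (fun hh => h_s_p2 hh.symm) (fun hh => h_s_r hh.symm)
                    · -- h_q2_y false
                      exact no_fork hfork d_x_y d_xp2 d_yp2 d_u_q2 d_q2_x.symm d_q2_y.symm h_u_x h_u_y h_u_p2 h_p2_q2 h_x_y (fun hh => h_p2_x hh.symm) (fun hh => h_p2_y hh.symm) h_u_q2 (fun hh => h_q2_x hh.symm) (fun hh => h_q2_y hh.symm)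
                  · -- h_s_y false
                    exact no_fork hfork d_s_p2.symm d_yp2.symm d_s_y d_u_q1 d_p2_q1 d_s_q1 h_u_p2 h_u_s h_u_y h_q1_y.symm (fun hh => h_s_p2 hh.symm) h_p2_y h_s_y h_u_q1 h_p2_q1 h_s_q1
                · -- h_q1_y false
                  exact no_fork hfork d_yp2.symm d_xp2.symm d_x_y.symm d_u_q1 d_p2_q1 d_q1_y.symm h_u_p2 h_u_y h_u_x h_q1_x.symm h_p2_y h_p2_x (fun hh => h_x_y hh.symm) h_u_q1 h_p2_q1 (fun hh => h_q1_y hh.symm)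
          · -- h_q1_x false
            exact no_fork hfork d_p2_q1 d_xp2.symm d_q1_x d_s_p1.symm d_s_p2.symm d_s_q1.symm h_p1_p2 h_p1_q1 h_p1_x h_s_x.symm h_p2_q1 h_p2_x h_q1_x (fun hh => h_s_p1 hh.symm) (fun hh => h_s_p2 hh.symm) (fun hh => h_s_q1 hh.symm)
    · -- h_s_x false
      by_cases h_p2_x : G.Adj p2 x
      · -- h_p2_x true
        by_cases h_q2_y : G.Adj q2 y
        · -- h_q2_y true
          by_cases h_s_y : G.Adj s y
          · -- h_s_y true
            exact no_fork hfork d_s_q2.symm d_p1_q2.symm d_s_p1 d_x_y.symm d_q2_x d_s_x h_q2_y.symm h_s_y.symm h_p1_y.symm h_p1_x (fun hh => h_s_q2 hh.symm) (fun hh => h_p1_q2 hh.symm) h_s_p1 (fun hh => h_x_y hh.symm) h_q2_x h_s_x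
          · -- h_s_y false
            exact no_fork hfork d_s_x d_s_y d_x_y d_u_q2 d_s_q2 d_q2_x.symm h_u_s h_u_x h_u_y h_q2_y.symm h_s_x h_s_y h_x_y h_u_q2 h_s_q2 (fun hh => h_q2_x hh.symm)
        · -- h_q2_y false
          by_cases h_s_y : G.Adj s y
          · -- h_s_y true
            by_cases h_p2_y : G.Adj p2 y
            · -- h_p2_y true
              exact no_fork hfork d_q2_x d_q2_y d_x_y d_s_p2.symm d_s_q2.symm d_s_x.symm h_p2_q2 h_p2_x h_p2_y h_s_y.symm h_q2_x h_q2_y h_x_y (fun hh => h_s_p2 hh.symm) (fun hh => h_s_q2 hh.symm) (fun hh => h_s_x hh.symm)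
            · -- h_p2_y false
              exact no_butterfly hbf d_s_p2.symm d_yp2.symm d_s_x.symm d_x_y h_u_p2 h_u_x h_u_s h_u_y h_p2_x h_s_y (fun hh => h_s_p2 hh.symm) h_p2_y (fun hh => h_s_x hh.symm) h_x_y
          · -- h_s_y false
            by_cases h_p2_y : G.Adj p2 y
            · -- h_p2_y true
              by_cases h_q1_y : G.Adj q1 y
              · -- h_q1_y true
                by_cases h_q1_x : G.Adj q1 x
                · -- h_q1_x true
                  by_cases h_r_x : G.Adj r x
                  · -- h_r_x true
                    exact no_butterfly hbf d_p2_q1 d_p2_r d_u_q1 d_u_r h_p2_x.symm h_u_x.symm h_q1_x.symm h_r_x.symm h_u_p2.symm h_q1_r h_p2_q1 h_p2_r h_u_q1 h_u_r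
                  · -- h_r_x false
                    by_cases h_r_y : G.Adj r y
                    · -- h_r_y true
                      exact no_fork hfork d_s_x d_s_y d_x_y d_u_r d_s_r d_r_x.symm h_u_s h_u_x h_u_y h_r_y.symm h_s_x h_s_y h_x_y h_u_r h_s_r (fun hh => h_r_x hh.symm)
                    · -- h_r_y false
                      exact no_fork hfork d_x_y d_q2_x.symm d_q2_y.symm d_p2_r d_r_x.symm d_r_y.symm h_p2_x h_p2_y h_p2_q2 h_q2_r h_x_y (fun hh => h_q2_x hh.symm) (fun hh => h_q2_y hh.symm) h_p2_r (fun hh => h_r_x hh.symm) (fun hh => h_r_y hh.symm)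
                · -- h_q1_x false
                  exact no_fork hfork d_s_x d_s_y d_x_y d_u_q1 d_s_q1 d_q1_x.symm h_u_s h_u_x h_u_y h_q1_y.symm h_s_x h_s_y h_x_y h_u_q1 h_s_q1 (fun hh => h_q1_x hh.symm)
              · -- h_q1_y false
                by_cases h_q1_x : G.Adj q1 x
                · -- h_q1_x true
                  exact no_fork hfork d_s_y d_s_x d_x_y.symm d_u_q1 d_s_q1 d_q1_y.symm h_u_s h_u_y h_u_x h_q1_x.symm h_s_y h_s_x (fun hh => h_x_y hh.symm) h_u_q1 h_s_q1 (fun hh => h_q1_y hh.symm)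
                · -- h_q1_x false
                  by_cases h_r_x : G.Adj r x
                  · -- h_r_x true
                    exact no_fork hfork d_q1_q2 d_q1_x d_q2_x d_u_r.symm d_u_q1.symm d_u_q2.symm h_q1_r.symm h_q2_r.symm h_r_x h_u_x.symm h_q1_q2 h_q1_x h_q2_x (fun hh => h_u_r hh.symm) (fun hh => h_u_q1 hh.symm) (fun hh => h_u_q2 hh.symm)
                  · -- h_r_x false
                    by_cases h_r_y : G.Adj r y
                    · -- h_r_y true
                      exact no_fork hfork d_s_x d_s_y d_x_y d_u_r d_s_r d_r_x.symm h_u_s h_u_x h_u_y h_r_y.symm h_s_x h_s_y h_x_y h_u_r h_s_r (fun hh => h_r_x hh.symm)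
                    · -- h_r_y false
                      exact no_fork hfork d_x_y d_q1_x.symm d_q1_y.symm d_p1_r d_r_x.symm d_r_y.symm h_p1_x h_p1_y h_p1_q1 h_q1_r h_x_y (fun hh => h_q1_x hh.symm) (fun hh => h_q1_y hh.symm) h_p1_r (fun hh => h_r_x hh.symm) (fun hh => h_r_y hh.symm)
            · -- h_p2_y false
              exact no_fork hfork d_s_y d_s_p2 d_yp2 d_u_q2 d_s_q2 d_q2_y.symm h_u_s h_u_y h_u_p2 h_p2_q2 h_s_y h_s_p2 (fun hh => h_p2_y hh.symm) h_u_q2 h_s_q2 (fun hh => h_q2_y hh.symm)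
      · -- h_p2_x false
        exact no_fork hfork d_s_x d_s_p2 d_xp2 d_u_q2 d_s_q2 d_q2_x.symm h_u_s h_u_x h_u_p2 h_p2_q2 h_s_x h_s_p2 (fun hh => h_p2_x hh.symm) h_u_q2 h_s_q2 (fun hh => h_q2_x hh.symm)

end Helpers

/-- If a (fork, butterfly)-free graph `G` contains an induced odd balloon, then `G` has a
trisimplicial vertex: a vertex whose open neighborhood is the union of three cliques. -/
theorem fork_butterfly_free_oddBalloon_trisimplicial {V : Type*} [Fintype V]
    (G : SimpleGraph V) (hfork : HFree G fork) (hbutterfly : HFree G butterfly)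
    (hballoon : ∃ n : ℕ, Odd n ∧ 5 ≤ n ∧ Nonempty (oddBalloon n ↪g G)) :
    ∃ u : V, ∃ K₁ K₂ K₃ : Set V, G.IsClique K₁ ∧ G.IsClique K₂ ∧ G.IsClique K₃ ∧
      G.neighborSet u = K₁ ∪ K₂ ∪ K₃ := by
  obtain ⟨n, hodd, hn, ⟨f⟩⟩ := hballoon
  have h0 : (0:ℕ) < n := by omega
  have h1 : (1:ℕ) < n := by omega
  have h2 : (2:ℕ) < n := by omega
  have h3 : (3:ℕ) < n := by omega
  have hm' : n-2 < n := by omega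
  have hl' : n-1 < n := by omega
  set u := f (Sum.inr 0) with hu
  set s := f (Sum.inr 1) with hs
  set w0 := f (Sum.inl ⟨0,h0⟩) with hw0
  set w1 := f (Sum.inl ⟨1,h1⟩) with hw1
  set w2 := f (Sum.inl ⟨2,h2⟩) with hw2
  set w3 := f (Sum.inl ⟨3,h3⟩) with hw3
  set wm := f (Sum.inl ⟨n-2,hm'⟩) with hwm
  set wl := f (Sum.inl ⟨n-1,hl'⟩) with hwl
  -- mod facts
  have m1 : (0+1) % n = 1 := by rw [Nat.mod_eq_of_lt (by omega)]
  have m2 : (1+1) % n = 2 := by rw [Nat.mod_eq_of_lt (by omega)]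
  have m3 : (2+1) % n = 3 := by rw [Nat.mod_eq_of_lt (by omega)]
  have m4 : (3+1) % n = 4 := by rw [Nat.mod_eq_of_lt (by omega)]
  have mm : (n-2+1) % n = n-1 := by
    rw [show n-2+1 = n-1 by omega, Nat.mod_eq_of_lt (by omega)]
  have ml : (n-1+1) % n = 0 := by rw [show n-1+1 = n by omega, Nat.mod_self]
  -- adjacency facts
  have h_us : G.Adj u s := f.map_adj_iff.2 ob_u_s
  have h_u0 : G.Adj u w0 := f.map_adj_iff.2 ((ob_u_inl h0).2 (Or.inl rfl))
  have h_u1 : G.Adj u w1 := f.map_adj_iff.2 ((ob_u_inl h1).2 (Or.inr rfl))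
  have n_u2 : ¬ G.Adj u w2 := fun h => by
    rcases (ob_u_inl h2).1 (f.map_adj_iff.1 h) with h'|h' <;> omega
  have n_u3 : ¬ G.Adj u w3 := fun h => by
    rcases (ob_u_inl h3).1 (f.map_adj_iff.1 h) with h'|h' <;> omega
  have n_um : ¬ G.Adj u wm := fun h => by
    rcases (ob_u_inl hm').1 (f.map_adj_iff.1 h) with h'|h' <;> omega
  have n_ul : ¬ G.Adj u wl := fun h => by
    rcases (ob_u_inl hl').1 (f.map_adj_iff.1 h) with h'|h' <;> omega
  have n_s0 : ¬ G.Adj s w0 := fun h => ob_s_inl h0 (f.map_adj_iff.1 h)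
  have n_s1 : ¬ G.Adj s w1 := fun h => ob_s_inl h1 (f.map_adj_iff.1 h)
  have n_s2 : ¬ G.Adj s w2 := fun h => ob_s_inl h2 (f.map_adj_iff.1 h)
  have n_s3 : ¬ G.Adj s w3 := fun h => ob_s_inl h3 (f.map_adj_iff.1 h)
  have n_sm : ¬ G.Adj s wm := fun h => ob_s_inl hm' (f.map_adj_iff.1 h)
  have n_sl : ¬ G.Adj s wl := fun h => ob_s_inl hl' (f.map_adj_iff.1 h)
  have h_01 : G.Adj w0 w1 := f.map_adj_iff.2 ((ob_inl_adj h0 h1).2 ⟨by omega, Or.inl m1⟩)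
  have h_12 : G.Adj w1 w2 := f.map_adj_iff.2 ((ob_inl_adj h1 h2).2 ⟨by omega, Or.inl m2⟩)
  have h_23 : G.Adj w2 w3 := f.map_adj_iff.2 ((ob_inl_adj h2 h3).2 ⟨by omega, Or.inl m3⟩)
  have h_0l : G.Adj w0 wl := f.map_adj_iff.2 ((ob_inl_adj h0 hl').2 ⟨by omega, Or.inr ml⟩)
  have h_ml : G.Adj wm wl := f.map_adj_iff.2 ((ob_inl_adj hm' hl').2 ⟨by omega, Or.inl mm⟩)
  have n_02 : ¬ G.Adj w0 w2 := fun h => by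
    have hh := ((ob_inl_adj h0 h2).1 (f.map_adj_iff.1 h)).2
    rw [m1, m3] at hh; omega
  have n_03 : ¬ G.Adj w0 w3 := fun h => by
    have hh := ((ob_inl_adj h0 h3).1 (f.map_adj_iff.1 h)).2
    rw [m1, m4] at hh; omega
  have n_13 : ¬ G.Adj w1 w3 := fun h => by
    have hh := ((ob_inl_adj h1 h3).1 (f.map_adj_iff.1 h)).2
    rw [m2, m4] at hh; omega
  have n_1l : ¬ G.Adj w1 wl := fun h => by
    have hh := ((ob_inl_adj h1 hl').1 (f.map_adj_iff.1 h)).2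
    rw [m2, ml] at hh; omega
  have n_2l : ¬ G.Adj w2 wl := fun h => by
    have hh := ((ob_inl_adj h2 hl').1 (f.map_adj_iff.1 h)).2
    rw [m3, ml] at hh; omega
  -- distinctness from injectivity
  have d_s0 : s ≠ w0 := fun h => by simpa using f.injective h
  have d_s1 : s ≠ w1 := fun h => by simpa using f.injective h
  have d_s2 : s ≠ w2 := fun h => by simpa using f.injective h
  have d_sl : s ≠ wl := fun h => by simpa using f.injective h
  have d_u2 : u ≠ w2 := fun h => by simpa using f.injective h
  have d_ul : u ≠ wl := fun h => by simpa using f.injective h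
  have d_2l : w2 ≠ wl := fun h => by
    have := f.injective h
    simp only [Sum.inl.injEq, Fin.mk.injEq] at this
    omega
  -- the two clique key facts
  have key : (∀ a b : V, (G.Adj u a ∧ G.Adj w0 a ∧ a ≠ w1) →
        (G.Adj u b ∧ G.Adj w0 b ∧ b ≠ w1) → a ≠ b → G.Adj a b) ∧
      (∀ a b : V, (G.Adj u a ∧ G.Adj w1 a ∧ a ≠ w0) →
        (G.Adj u b ∧ G.Adj w1 b ∧ b ≠ w0) → a ≠ b → G.Adj a b) := by
    by_cases h7 : 7 ≤ n
    · have n_0m : ¬ G.Adj w0 wm := fun h => by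
        have hh := ((ob_inl_adj h0 hm').1 (f.map_adj_iff.1 h)).2
        rw [m1, mm] at hh; omega
      have n_1m : ¬ G.Adj w1 wm := fun h => by
        have hh := ((ob_inl_adj h1 hm').1 (f.map_adj_iff.1 h)).2
        rw [m2, mm] at hh; omega
      have n_2m : ¬ G.Adj w2 wm := fun h => by
        have hh := ((ob_inl_adj h2 hm').1 (f.map_adj_iff.1 h)).2
        rw [m3, mm] at hh; omega
      have n_3m : ¬ G.Adj w3 wm := fun h => by
        have hh := ((ob_inl_adj h3 hm').1 (f.map_adj_iff.1 h)).2
        rw [m4, mm] at hh; omega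
      have n_3l : ¬ G.Adj w3 wl := fun h => by
        have hh := ((ob_inl_adj h3 hl').1 (f.map_adj_iff.1 h)).2
        rw [m4, ml] at hh; omega
      constructor
      · intro a b ha hb hne
        by_contra hab
        exact pair_big hfork hbutterfly u s w0 w1 wl w2 wm w3 a b
          h_us h_u0 h_u1 n_ul n_u2 n_um n_u3 ha.1 hb.1
          n_s0 n_s1 n_sl n_s2 n_sm n_s3
          h_01 h_0l n_02 n_0m n_03 ha.2.1 hb.2.1
          n_1l h_12 n_1m n_13
          (fun hh => n_2l hh.symm) h_ml.symm (fun hh => n_3l hh.symm)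
          n_2m h_23 (fun hh => n_3m hh.symm)
          hab hne ha.2.2 hb.2.2
      · intro a b ha hb hne
        by_contra hab
        exact pair_big hfork hbutterfly u s w1 w0 w2 wl w3 wm a b
          h_us h_u1 h_u0 n_u2 n_ul n_u3 n_um ha.1 hb.1
          n_s1 n_s0 n_s2 n_sl n_s3 n_sm
          h_01.symm h_12 n_1l n_13 n_1m ha.2.1 hb.2.1
          n_02 h_0l n_03 n_0m
          n_2l h_23 n_2m
          (fun hh => n_3l hh.symm) h_ml.symm
          n_3m
          hab hne ha.2.2 hb.2.2
    · have hn5 : n = 5 := by obtain ⟨k,hk⟩ := hodd; omega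
      have h_3l : G.Adj w3 wl := f.map_adj_iff.2 ((ob_inl_adj h3 hl').2
        ⟨by omega, Or.inl (by rw [m4]; omega)⟩)
      constructor
      · intro a b ha hb hne
        by_contra hab
        exact pair_five hfork hbutterfly u s w0 w1 wl w2 w3 a b
          h_us h_u0 h_u1 n_ul n_u2 n_u3 ha.1 hb.1
          n_s0 n_s1 n_sl n_s2 n_s3
          h_01 h_0l n_02 n_03 ha.2.1 hb.2.1
          n_1l h_12 n_13
          (fun hh => n_2l hh.symm) h_3l.symm h_23
          hab hne ha.2.2 hb.2.2
      · intro a b ha hb hne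
        by_contra hab
        exact pair_five hfork hbutterfly u s w1 w0 w2 wl w3 a b
          h_us h_u1 h_u0 n_u2 n_ul n_u3 ha.1 hb.1
          n_s1 n_s0 n_s2 n_sl n_s3
          h_01.symm h_12 n_1l n_13 ha.2.1 hb.2.1
          n_02 h_0l n_03
          n_2l h_23 h_3l.symm
          hab hne ha.2.2 hb.2.2
  refine ⟨u, insert w0 {x | G.Adj u x ∧ G.Adj w0 x ∧ x ≠ w1},
    insert w1 {x | G.Adj u x ∧ G.Adj w1 x ∧ x ≠ w0}, {s}, ?_, ?_, ?_, ?_⟩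
  · -- K1 clique
    intro a ha b hb hne
    rcases Set.mem_insert_iff.1 ha with rfl | ha'
    · rcases Set.mem_insert_iff.1 hb with rfl | hb'
      · exact absurd rfl hne
      · exact hb'.2.1
    · rcases Set.mem_insert_iff.1 hb with rfl | hb'
      · exact ha'.2.1.symm
      · exact key.1 a b ha' hb' hne
  · -- K2 clique
    intro a ha b hb hne
    rcases Set.mem_insert_iff.1 ha with rfl | ha'
    · rcases Set.mem_insert_iff.1 hb with rfl | hb'
      · exact absurd rfl hne
      · exact hb'.2.1
    · rcases Set.mem_insert_iff.1 hb with rfl | hb'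
      · exact ha'.2.1.symm
      · exact key.2 a b ha' hb' hne
  · -- K3 clique
    intro a ha b hb hne
    simp only [Set.mem_singleton_iff] at ha hb
    exact absurd (ha.trans hb.symm) hne
  · -- neighborhood cover
    ext x
    simp only [mem_neighborSet, Set.mem_union, Set.mem_insert_iff,
      Set.mem_setOf_eq, Set.mem_singleton_iff]
    constructor
    · intro hx
      by_cases e0 : x = w0
      · exact Or.inl (Or.inl (Or.inl e0))
      by_cases e1 : x = w1
      · exact Or.inl (Or.inr (Or.inl e1))
      by_cases a0 : G.Adj w0 x
      · exact Or.inl (Or.inl (Or.inr ⟨hx, a0, e1⟩))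
      by_cases a1 : G.Adj w1 x
      · exact Or.inl (Or.inr (Or.inr ⟨hx, a1, e0⟩))
      by_cases es : x = s
      · exact Or.inr es
      by_cases axs : G.Adj x s
      · exact (no_butterfly hbutterfly (fun h => e0 h.symm) d_s0.symm
          (fun h => e1 h.symm) d_s1.symm h_u0 h_u1 hx h_us h_01 axs
          a0 (fun hh => n_s0 hh.symm) a1 (fun hh => n_s1 hh.symm)).elim
      · have hxl : G.Adj x wl := by
          by_contra hxl
          exact no_fork hfork es e0 d_s0 d_ul (fun h => n_ul (h ▸ hx)) d_sl
            hx h_us h_u0 h_0l axs (fun hh => a0 hh.symm) n_s0 n_ul hxl n_sl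
        have hx2 : G.Adj x w2 := by
          by_contra hx2
          exact no_fork hfork es e1 d_s1 d_u2 (fun h => n_u2 (h ▸ hx)) d_s2
            hx h_us h_u1 h_12 axs (fun hh => a1 hh.symm) n_s1 n_u2 hx2 n_s2
        exact (no_fork hfork d_2l d_u2.symm d_ul.symm es d_s2.symm d_sl.symm
          hx2 hxl hx.symm h_us n_2l (fun hh => n_u2 hh.symm) (fun hh => n_ul hh.symm)
          axs (fun hh => n_s2 hh.symm) (fun hh => n_sl hh.symm)).elim
    · rintro ((h | h) | h)
      · rcases h with rfl | h
        · exact h_u0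
        · exact h.1
      · rcases h with rfl | h
        · exact h_u1
        · exact h.1
      · rw [h]; exact h_us
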